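/- arXiv:1005.1304 — 2 statements merged into one kernel-verified Lean document; each statement's English description precedes it below -/
import Mathlib

section
/- Let ε_R : R → T ← S : ε_S be surjective homomorphisms of commutative noetherian local rings with common residue field k, and let P = R ×_T S with maximal ideal 𝔭. Then edim(R ×_T S) ≥ edim R + edim S − edim T, where edim denotes the minimal number of generators of the maximal ideal. -/
open RingTheory.Sequence Function

noncomputable section

/-- The fiber product `R ×_T S` as a subring of `R × S`. -/
def fiberProd {R S T : Type*} [CommRing R] [CommRing S] [CommRing T]
    (f : R →+* T) (g : S →+* T) : Subring (R × S) :=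
  RingHom.eqLocus (f.comp (RingHom.fst R S)) (g.comp (RingHom.snd R S))

/-- Length of a module: the Krull dimension of its lattice of submodules. -/
noncomputable def lenE (R M : Type*) [CommRing R] [AddCommGroup M] [Module R M] : ℕ∞ :=
  (Order.krullDim (Submodule R M)).unbotD 0

/-- Depth of a local ring: supremum of lengths of regular sequences of nonunits. -/
noncomputable def rdepth (Q : Type*) [CommRing Q] : ℕ∞ :=
  sSup {n : ℕ∞ | ∃ rs : List Q, (∀ x ∈ rs, x ∈ nonunits Q) ∧
    RingTheory.Sequence.IsRegular Q rs ∧ (rs.length : ℕ∞) = n}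

/-- A local ring is Cohen-Macaulay if its depth equals its Krull dimension. -/
def IsCMRing (Q : Type*) [CommRing Q] : Prop :=
  (rdepth Q : WithBot ℕ∞) = ringKrullDim Q

/-- Cohen-Macaulay local ring of dimension `d`. -/
def IsCMOfDim (Q : Type*) [CommRing Q] (d : ℕ) : Prop :=
  ringKrullDim Q = ((d : ℕ∞) : WithBot ℕ∞) ∧ rdepth Q = d

/-- The socle of a module over a local ring: largest submodule killed by the maximal ideal
(= set of nonunits). -/
noncomputable def socle (Q M : Type*) [CommRing Q] [AddCommGroup M] [Module Q M] :
    Submodule Q M :=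
  sSup {N : Submodule Q M | ∀ r ∈ nonunits Q, ∀ x ∈ N, r • x = 0}

/-- A local ring is Gorenstein if it is Cohen-Macaulay (there is a maximal regular
sequence of length its Krull dimension) and of type one, i.e. the socle of the artinian
reduction is a simple module. -/
def IsGorensteinRing (Q : Type*) [CommRing Q] : Prop :=
  ∃ rs : List Q, (∀ x ∈ rs, x ∈ nonunits Q) ∧ RingTheory.Sequence.IsRegular Q rs ∧
    ((rs.length : ℕ∞) : WithBot ℕ∞) = ringKrullDim Q ∧
    IsSimpleModule Q (socle Q (Q ⧸ (Ideal.ofList rs)))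

/-- Gorenstein local ring of dimension `d`. -/
def IsGorensteinOfDim (Q : Type*) [CommRing Q] (d : ℕ) : Prop :=
  ringKrullDim Q = ((d : ℕ∞) : WithBot ℕ∞) ∧ ∃ rs : List Q, (∀ x ∈ rs, x ∈ nonunits Q) ∧
    RingTheory.Sequence.IsRegular Q rs ∧ rs.length = d ∧
    IsSimpleModule Q (socle Q (Q ⧸ (Ideal.ofList rs)))

/-- The embedding dimension: minimal number of generators of the maximal ideal
(the ideal of nonunits). -/
noncomputable def edim (Q : Type*) [CommRing Q] : ℕ :=
  sInf {n : ℕ | ∃ s : Finset Q, s.card = n ∧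
    ((Ideal.span (s : Set Q) : Ideal Q) : Set Q) = nonunits Q}


/-!
Regard `R`, `S` and `T` as modules over `P = R ×_T S` through the projections. These are
surjective, so the minimal number of generators `μ` of an ideal of `R`, `S` or `T` is the same
over `P`, and the maximal ideal `𝔭` of `P` is the kernel of the surjection `𝔯 × 𝔰 → 𝔱`,
`(r, s) ↦ ε_R r - ε_S s`. Over the local ring `P`, `μ` is additive on products (it is the
dimension of the fibre at the closed point) and subadditive along an exact sequence (generators
of the kernel together with lifts of generators of the image generate), hence
`μ 𝔯 + μ 𝔰 = μ (𝔯 × 𝔰) ≤ μ 𝔭 + μ 𝔱`.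
-/

open IsLocalRing

theorem edim_eq_spanFinrank_maximalIdeal (Q : Type*) [CommRing Q] [IsLocalRing Q] :
    edim Q = (maximalIdeal Q).spanFinrank := by
  rw [Submodule.spanFinrank_eq_iInf, edim, ← sInf_range]
  congr 1
  ext n
  have : ((maximalIdeal Q : Ideal Q) : Set Q) = nonunits Q := rfl
  simp [← SetLike.coe_set_eq, Ideal.span, this, and_comm]

theorem isNoetherian_of_surjective_algebraMap {R S : Type*} [CommSemiring R] [Semiring S]
    [Algebra R S] [IsNoetherianRing S] (h : Surjective (algebraMap R S)) :
    IsNoetherian R S :=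
  ⟨fun N ↦ by
    rw [← Submodule.span_eq N, ← Submodule.restrictScalars_span R S h]
    exact (IsNoetherian.noetherian _).restrictScalars_of_surjective h⟩

namespace Submodule

theorem spanFinrank_restrictScalars_eq {R S M : Type*} [CommSemiring R] [Semiring S]
    [Algebra R S] [AddCommMonoid M] [Module R M] [Module S M] [IsScalarTower R S M]
    (h : Surjective (algebraMap R S)) (N : Submodule S M) :
    (N.restrictScalars R).spanFinrank = N.spanFinrank := by
  rw [spanFinrank, spanRank_restrictScalars_eq h, spanFinrank]

theorem spanFinrank_le_spanFinrank_inf_ker_add_spanFinrank_map {R M N : Type*} [Ring R]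
    [AddCommGroup M] [Module R M] [AddCommGroup N] [Module R N] (U : Submodule R M)
    (φ : M →ₗ[R] N) (hker : (U ⊓ LinearMap.ker φ).FG) (hmap : (U.map φ).FG) :
    U.spanFinrank ≤ (U ⊓ LinearMap.ker φ).spanFinrank + (U.map φ).spanFinrank := by
  classical
  obtain ⟨k, hk_card, hk_span⟩ := hker.exists_span_finset_card_eq_spanFinrank
  obtain ⟨c, hc_card, hc_span⟩ := hmap.exists_span_finset_card_eq_spanFinrank
  have hlift : ∀ y ∈ c, ∃ x ∈ U, φ x = y := fun y hy ↦ mem_map.1 (hc_span ▸ subset_span hy)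
  choose! lift hlift_mem hlift_eq using hlift
  set W := span R (c.image lift : Set M)
  have hWU : W ≤ U := span_le.2 (by simpa [Set.subset_def] using hlift_mem)
  have hUW : U ≤ W ⊔ LinearMap.ker φ := by
    rw [← LinearMap.map_le_map_iff, map_span, ← hc_span]
    exact span_mono fun y hy ↦ ⟨lift y, by simpa using ⟨y, hy, rfl⟩, hlift_eq y hy⟩
  have hU : U = span R ↑(k ∪ c.image lift) := by
    rw [Finset.coe_union, span_union, hk_span, sup_comm, inf_comm U,
      ← sup_inf_assoc_of_le _ hWU, inf_eq_right.2 hUW]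
  calc U.spanFinrank ≤ (k ∪ c.image lift).card := by
        rw [hU, ← Set.ncard_coe_finset]
        exact spanFinrank_span_le_ncard_of_finite (Finset.finite_toSet _)
    _ ≤ k.card + c.card := (Finset.card_union_le _ _).trans (by grw [Finset.card_image_le])
    _ = _ := by rw [hk_card, hc_card]

def prodEquiv {R M N : Type*} [Semiring R] [AddCommMonoid M] [Module R M] [AddCommMonoid N]
    [Module R N] (A : Submodule R M) (B : Submodule R N) : A.prod B ≃ₗ[R] A × B where
  toFun x := (⟨x.1.1, x.2.1⟩, ⟨x.1.2, x.2.2⟩)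
  invFun y := ⟨(y.1, y.2), y.1.2, y.2.2⟩
  map_add' _ _ := rfl
  map_smul' _ _ := rfl
  left_inv _ := rfl
  right_inv _ := rfl

theorem spanFinrank_prod {R M N : Type*} [CommRing R] [IsLocalRing R] [AddCommGroup M]
    [Module R M] [AddCommGroup N] [Module R N] {A : Submodule R M} {B : Submodule R N}
    (hA : A.FG) (hB : B.FG) :
    (A.prod B).spanFinrank = A.spanFinrank + B.spanFinrank := by
  have := Module.Finite.iff_fg.2 hA
  have := Module.Finite.iff_fg.2 hB
  rw [← TensorProduct.spanFinrank_top_eq_of_residueField _ (hA.prod hB),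
    ← TensorProduct.spanFinrank_top_eq_of_residueField _ hA,
    ← TensorProduct.spanFinrank_top_eq_of_residueField _ hB,
    ← Module.finrank_eq_spanFinrank_of_free, ← Module.finrank_eq_spanFinrank_of_free,
    ← Module.finrank_eq_spanFinrank_of_free, ← Module.finrank_prod]
  exact (((prodEquiv A B).baseChange R (ResidueField R) _ _).trans
    (TensorProduct.prodRight R (ResidueField R) (ResidueField R) A B)).finrank_eq

end Submodule

theorem AlgHom.map_restrictScalars_maximalIdeal_of_surjective {P A B : Type*} [CommRing P]
    [CommRing A] [CommRing B] [Algebra P A] [Algebra P B] [IsLocalRing A] [IsLocalRing B]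
    (φ : A →ₐ[P] B) (hφ : Surjective φ) :
    ((maximalIdeal A).restrictScalars P).map φ.toLinearMap = (maximalIdeal B).restrictScalars P := by
  ext t
  rw [Submodule.restrictScalars_mem, ← map_maximalIdeal_of_surjective (φ : A →+* B) hφ,
    Ideal.mem_map_iff_of_surjective (φ : A →+* B) hφ]
  rfl

namespace RingHom

variable {R S T : Type*} [CommRing R] [CommRing S] [CommRing T] (f : R →+* T) (g : S →+* T)

local instance : Algebra (f.pullback g) R := (f.pullbackFst g).toAlgebra
local instance : Algebra (f.pullback g) S := (f.pullbackSnd g).toAlgebra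
local instance : Algebra (f.pullback g) T := (f.comp (f.pullbackFst g)).toAlgebra

def pullbackLeftAlgHom : R →ₐ[f.pullback g] T := ⟨f, fun _ ↦ rfl⟩

def pullbackRightAlgHom : S →ₐ[f.pullback g] T := ⟨g, fun p ↦ p.2.symm⟩

def pullbackDiff : R × S →ₗ[f.pullback g] T :=
  (f.pullbackLeftAlgHom g).toLinearMap.coprod (-(f.pullbackRightAlgHom g).toLinearMap)

def pullbackIncl : f.pullback g →ₗ[f.pullback g] R × S :=
  (Algebra.linearMap _ R).prod (Algebra.linearMap _ S)

@[simp]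
theorem pullbackDiff_apply (x : R × S) : f.pullbackDiff g x = f x.1 - g x.2 :=
  (sub_eq_add_neg _ _).symm

@[simp]
theorem pullbackIncl_apply (p : f.pullback g) : f.pullbackIncl g p = p := rfl

theorem pullbackIncl_injective : Injective (f.pullbackIncl g) := fun _ _ h ↦ Subtype.ext h

variable [IsLocalRing R] [IsLocalRing S]

theorem prod_maximalIdeal_inf_ker_pullbackDiff [IsLocalHom f] [IsLocalHom g]
    [IsLocalRing (f.pullback g)] :
    ((maximalIdeal R).restrictScalars (f.pullback g)).prod
        ((maximalIdeal S).restrictScalars (f.pullback g)) ⊓ LinearMap.ker (f.pullbackDiff g) =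
      Submodule.map (f.pullbackIncl g) (maximalIdeal (f.pullback g)) := by
  ext x
  simp only [Submodule.mem_inf, Submodule.mem_prod, Submodule.restrictScalars_mem,
    LinearMap.mem_ker, Submodule.mem_map, mem_maximalIdeal, mem_nonunits_iff, pullbackDiff_apply,
    pullbackIncl_apply, sub_eq_zero]
  constructor
  · rintro ⟨⟨hr, -⟩, hx⟩
    exact ⟨⟨x, hx⟩, fun hu ↦ hr ((isUnit_pullback_mk_iff f g hx).1 hu).1, rfl⟩
  · rintro ⟨p, hp, rfl⟩
    exact ⟨⟨mt (isUnit_of_map_unit (f.pullbackFst g) p) hp,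
      mt (isUnit_of_map_unit (f.pullbackSnd g) p) hp⟩, p.2⟩

variable [IsLocalRing T]

theorem map_pullbackDiff_prod_maximalIdeal (hf : Surjective f) (hg : Surjective g) :
    (((maximalIdeal R).restrictScalars (f.pullback g)).prod
        ((maximalIdeal S).restrictScalars (f.pullback g))).map (f.pullbackDiff g) =
      (maximalIdeal T).restrictScalars (f.pullback g) := by
  rw [pullbackDiff, LinearMap.map_coprod_prod, Submodule.map_neg,
    (f.pullbackLeftAlgHom g).map_restrictScalars_maximalIdeal_of_surjective hf,
    (f.pullbackRightAlgHom g).map_restrictScalars_maximalIdeal_of_surjective hg, sup_idem]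

theorem edim_add_edim_le_edim_pullback_add_edim [IsNoetherianRing R] [IsNoetherianRing S]
    (hf : Surjective f) (hg : Surjective g) :
    edim R + edim S ≤ edim (f.pullback g) + edim T := by
  have hfst := surjective_pullbackFst_of_surjective f g hg
  have hsnd := surjective_pullbackSnd_of_surjective f g hf
  have := IsLocalHom.of_surjective f hf
  have := IsLocalHom.of_surjective g hg
  have := isLocalRing_pullback f g
  have : IsNoetherian (f.pullback g) R := isNoetherian_of_surjective_algebraMap hfst
  have : IsNoetherian (f.pullback g) S := isNoetherian_of_surjective_algebraMap hsnd
  set U := ((maximalIdeal R).restrictScalars (f.pullback g)).prod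
    ((maximalIdeal S).restrictScalars (f.pullback g))
  have hU : U.spanFinrank = edim R + edim S := by
    rw [Submodule.spanFinrank_prod (IsNoetherian.noetherian _) (IsNoetherian.noetherian _),
      Submodule.spanFinrank_restrictScalars_eq hfst, Submodule.spanFinrank_restrictScalars_eq hsnd,
      edim_eq_spanFinrank_maximalIdeal, edim_eq_spanFinrank_maximalIdeal]
  have hker : (U ⊓ LinearMap.ker (f.pullbackDiff g)).spanFinrank = edim (f.pullback g) := by
    rw [prod_maximalIdeal_inf_ker_pullbackDiff f g, Submodule.spanFinrank_map_eq_of_injective _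
      (pullbackIncl_injective f g), edim_eq_spanFinrank_maximalIdeal]
  have hmap : (U.map (f.pullbackDiff g)).spanFinrank = edim T := by
    rw [map_pullbackDiff_prod_maximalIdeal f g hf hg,
      Submodule.spanFinrank_restrictScalars_eq (hf.comp hfst), edim_eq_spanFinrank_maximalIdeal]
  have := U.spanFinrank_le_spanFinrank_inf_ker_add_spanFinrank_map (f.pullbackDiff g)
    (IsNoetherian.noetherian _) ((IsNoetherian.noetherian U).map _)
  omega

end RingHom

theorem stmt4_general (R S T : Type) [CommRing R] [CommRing S] [CommRing T]
    [IsLocalRing R] [IsLocalRing S] [IsLocalRing T]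
    [IsNoetherianRing R] [IsNoetherianRing S]
    (eR : R →+* T) (eS : S →+* T)
    (hR : Function.Surjective eR) (hS : Function.Surjective eS) :
    edim R + edim S - edim T ≤ edim (fiberProd eR eS) :=
  tsub_le_iff_right.2 (eR.edim_add_edim_le_edim_pullback_add_edim eS hR hS)

/-- `edim(R ×_T S) ≥ edim R + edim S − edim T`. -/
theorem stmt4 (R S T : Type) [CommRing R] [CommRing S] [CommRing T]
    [IsLocalRing R] [IsLocalRing S] [IsLocalRing T]
    [IsNoetherianRing R] [IsNoetherianRing S] [IsNoetherianRing T]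
    (eR : R →+* T) (eS : S →+* T)
    (hR : Function.Surjective eR) (hS : Function.Surjective eS)
    [IsLocalRing (fiberProd eR eS)] :
    edim R + edim S - edim T ≤ edim (fiberProd eR eS) :=
  stmt4_general R S T eR eS hR hS
end
end

section
/- Let ε_R : R → T ← S : ε_S be surjective homomorphisms of commutative noetherian local rings with common residue field. Then dim(R ×_T S) = max{dim R, dim S}, and min{dim R, dim S} ≥ dim T, where dim denotes Krull dimension. -/
open RingTheory.Sequence Function

noncomputable section

/-! The projections of `R ×_T S` onto `R` and `S` are surjective and the product of their
kernels is zero, so every prime of `R ×_T S` contains one of the two kernels. Hence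
`Spec (R ×_T S)` is the union of the closed, upward closed subsets `Spec R` and `Spec S`, and a
chain of primes lies in whichever of them contains its smallest member. -/

theorem Order.krullDim_le_max_of_isUpperSet {α : Type*} [Preorder α] {s t : Set α}
    (hs : IsUpperSet s) (ht : IsUpperSet t) (hst : s ∪ t = Set.univ) :
    Order.krullDim α ≤ max (Order.krullDim s) (Order.krullDim t) := by
  have krullDim_Ici_le {u : Set α} (hu : IsUpperSet u) {a : α} (ha : a ∈ u) :
      Order.krullDim (Set.Ici a) ≤ Order.krullDim u :=
    Order.krullDim_le_of_strictMono (Set.inclusion fun _ hb => hu hb ha) fun _ _ h => h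
  rw [Order.krullDim_eq_iSup_coheight]
  refine iSup_le fun a => ?_
  rw [Order.coheight_eq_krullDim_Ici]
  rcases (hst.symm ▸ Set.mem_univ a : a ∈ s ∪ t) with ha | ha
  · exact le_max_of_le_left (krullDim_Ici_le hs ha)
  · exact le_max_of_le_right (krullDim_Ici_le ht ha)

theorem PrimeSpectrum.isUpperSet_zeroLocus {A : Type*} [CommRing A] (s : Set A) :
    IsUpperSet (PrimeSpectrum.zeroLocus s) :=
  fun _ _ hpq hp => Set.Subset.trans hp hpq

theorem ringKrullDim_le_max_of_mul_eq_bot {A : Type*} [CommRing A] {I J : Ideal A}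
    (h : I * J = ⊥) : ringKrullDim A ≤ max (ringKrullDim (A ⧸ I)) (ringKrullDim (A ⧸ J)) := by
  rw [ringKrullDim_quotient, ringKrullDim_quotient]
  refine Order.krullDim_le_max_of_isUpperSet (PrimeSpectrum.isUpperSet_zeroLocus _)
    (PrimeSpectrum.isUpperSet_zeroLocus _) ?_
  rw [← PrimeSpectrum.zeroLocus_mul, h, PrimeSpectrum.zeroLocus_bot]

theorem ringKrullDim_eq_max_of_ker_mul_ker_eq_bot {A B C : Type*} [CommRing A] [CommRing B]
    [CommRing C] (f : A →+* B) (g : A →+* C) (hf : Surjective f) (hg : Surjective g)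
    (h : RingHom.ker f * RingHom.ker g = ⊥) :
    ringKrullDim A = max (ringKrullDim B) (ringKrullDim C) := by
  refine le_antisymm ?_ (max_le (ringKrullDim_le_of_surjective f hf)
    (ringKrullDim_le_of_surjective g hg))
  rw [← ringKrullDim_eq_of_ringEquiv (RingHom.quotientKerEquivOfSurjective hf),
    ← ringKrullDim_eq_of_ringEquiv (RingHom.quotientKerEquivOfSurjective hg)]
  exact ringKrullDim_le_max_of_mul_eq_bot h

namespace fiberProd

variable {R S T : Type*} [CommRing R] [CommRing S] [CommRing T] (f : R →+* T) (g : S →+* T)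

def fst : fiberProd f g →+* R := (RingHom.fst R S).comp (fiberProd f g).subtype

def snd : fiberProd f g →+* S := (RingHom.snd R S).comp (fiberProd f g).subtype

theorem fst_surjective (hg : Surjective g) : Surjective (fst f g) := fun r =>
  let ⟨s, hs⟩ := hg (f r)
  ⟨⟨(r, s), hs.symm⟩, rfl⟩

theorem snd_surjective (hf : Surjective f) : Surjective (snd f g) := fun s =>
  let ⟨r, hr⟩ := hf (g s)
  ⟨⟨(r, s), hr⟩, rfl⟩

theorem ker_fst_mul_ker_snd : RingHom.ker (fst f g) * RingHom.ker (snd f g) = ⊥ := by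
  refine eq_bot_iff.mpr (Ideal.mul_le.mpr fun x hx y hy => ?_)
  have hx : x.1.1 = 0 := hx
  have hy : y.1.2 = 0 := hy
  exact Subtype.ext (Prod.ext (by simp [hx]) (by simp [hy]))

end fiberProd

theorem stmt5_general (R S T : Type) [CommRing R] [CommRing S] [CommRing T]
    (eR : R →+* T) (eS : S →+* T)
    (hR : Function.Surjective eR) (hS : Function.Surjective eS) :
    ringKrullDim (fiberProd eR eS) = max (ringKrullDim R) (ringKrullDim S) ∧
    ringKrullDim T ≤ min (ringKrullDim R) (ringKrullDim S) :=
  ⟨ringKrullDim_eq_max_of_ker_mul_ker_eq_bot _ _ (fiberProd.fst_surjective eR eS hS)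
      (fiberProd.snd_surjective eR eS hR) (fiberProd.ker_fst_mul_ker_snd eR eS),
    le_min (ringKrullDim_le_of_surjective eR hR) (ringKrullDim_le_of_surjective eS hS)⟩

/-- `dim(R ×_T S) = max{dim R, dim S}` and `min{dim R, dim S} ≥ dim T`. -/
theorem stmt5 (R S T : Type) [CommRing R] [CommRing S] [CommRing T]
    [IsLocalRing R] [IsLocalRing S] [IsLocalRing T]
    [IsNoetherianRing R] [IsNoetherianRing S] [IsNoetherianRing T]
    (eR : R →+* T) (eS : S →+* T)
    (hR : Function.Surjective eR) (hS : Function.Surjective eS) :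
    ringKrullDim (fiberProd eR eS) = max (ringKrullDim R) (ringKrullDim S) ∧
    ringKrullDim T ≤ min (ringKrullDim R) (ringKrullDim S) :=
  stmt5_general R S T eR eS hR hS
end
end
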